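/- Let D be a weak divergence on {0,1}^m with ‖D‖_∞ = sup_P D(P‖U_m) < ∞ and D ≥ 0, and let Ext : {0,1}^n × {0,1}^d → {0,1}^m be a (k,ε) D-extractor. Then for every 0 < η ≤ 1, Ext is a (k + log₂(1/η), ε + η·‖D‖_∞) average-case D-extractor: for every joint distribution (Z,X) with average conditional min-entropy H̃_∞(X|Z) ≥ k + log₂(1/η), E_{z∼Z}[ D(Ext(X|_{Z=z}, U_d) ‖ U_m) ] ≤ ε + η·‖D‖_∞. -/

import Mathlib

open scoped BigOperators

/-- A probability mass function on a finite set. -/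
def IsPMF {X : Type*} [Fintype X] (P : X → ℝ) : Prop :=
  (∀ x, 0 ≤ P x) ∧ ∑ x, P x = 1

/-- The output distribution `Ext(X, U_d)` of an extractor on source `X`. -/
noncomputable def extDist (n d m : ℕ)
    (Ext : (Fin n → Bool) → (Fin d → Bool) → (Fin m → Bool))
    (X : (Fin n → Bool) → ℝ) : (Fin m → Bool) → ℝ :=
  fun y => ∑ x, ∑ s, X x * ((2 : ℝ) ^ d)⁻¹ * (if Ext x s = y then 1 else 0)

/-!
Split the conditioning values `z` according to whether the conditional source
`X|_{Z=z}` has min-entropy at least `k`, i.e. whether `max_x J(z,x) ≤ 2^{-k} Pr[Z=z]`.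
On good values the extractor guarantee gives `D ≤ ε`; on bad values only `D ≤ ‖D‖_∞` is
available, but each bad `z` has `Pr[Z=z] < 2^k max_x J(z,x)`, so the bad values carry mass at
most `2^k ∑_z max_x J(z,x) ≤ η` by the average min-entropy hypothesis.
-/

open Finset

section

variable {α : Type*} [Fintype α]

theorem IsPMF.div_sum {w : α → ℝ} (hw : ∀ x, 0 ≤ w x) (hs : 0 < ∑ x, w x) :
    IsPMF (fun x => w x / ∑ x', w x') :=
  ⟨fun x => div_nonneg (hw x) hs.le, by rw [← sum_div, div_self hs.ne']⟩

theorem IsPMF.inv_card [Nonempty α] : IsPMF (fun _ : α => (Fintype.card α : ℝ)⁻¹) :=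
  ⟨fun _ => by positivity, by simp⟩

theorem IsPMF.extDist {n d m : ℕ} (Ext : (Fin n → Bool) → (Fin d → Bool) → (Fin m → Bool))
    {X : (Fin n → Bool) → ℝ} (hX : IsPMF X) : IsPMF (extDist n d m Ext X) := by
  refine ⟨fun y => sum_nonneg fun x _ => sum_nonneg fun s _ => ?_, ?_⟩
  · have := hX.1 x
    positivity
  · simp only [_root_.extDist]
    rw [sum_comm]
    simp [sum_comm (γ := Fin m → Bool), ← mul_sum, ← sum_mul, hX.2]

variable [Nonempty α]

theorem sum_mul_apply_div_sum_le (F : (α → ℝ) → ℝ) {ε B t : ℝ} (hε : 0 ≤ ε) (hB : 0 ≤ B)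
    (ht : 0 < t) (hFB : ∀ P, IsPMF P → F P ≤ B)
    (hFε : ∀ P, IsPMF P → (∀ x, P x ≤ t) → F P ≤ ε) {w : α → ℝ} (hw : ∀ x, 0 ≤ w x) :
    (∑ x, w x) * F (fun x => w x / ∑ x', w x')
      ≤ (∑ x, w x) * ε + univ.sup' univ_nonempty w / t * B := by
  set s := ∑ x, w x
  set M := univ.sup' univ_nonempty w
  have hwM : ∀ x, w x ≤ M := fun x => le_sup' w (mem_univ x)
  have hMt : 0 ≤ M / t * B := by
    have := (hw (Classical.arbitrary α)).trans (hwM _)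
    positivity
  rcases (sum_nonneg fun x _ => hw x : 0 ≤ s).eq_or_lt with hs | hs
  · rw [show s = 0 from hs.symm, zero_mul, zero_mul, zero_add]
    exact hMt
  have hP := IsPMF.div_sum hw hs
  by_cases hgood : M ≤ t * s
  · have hFP : F (fun x => w x / s) ≤ ε :=
      hFε _ hP fun x => (div_le_iff₀ hs).2 ((hwM x).trans hgood)
    nlinarith
  · -- on a low-min-entropy fibre, the mass `s` is paid for by `M / t`
    have hsM : s ≤ M / t := by
      rw [le_div_iff₀ ht]
      linarith
    nlinarith [hFB _ hP]

variable {ζ : Type*} [Fintype ζ]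

theorem inv_card_le_sum_sup' {J : ζ × α → ℝ} (hJ : ∑ q, J q = 1) :
    (Fintype.card α : ℝ)⁻¹ ≤ ∑ z, univ.sup' univ_nonempty fun x => J (z, x) := by
  rw [inv_le_iff_one_le_mul₀ (by positivity)]
  calc (1 : ℝ) = ∑ z, ∑ x, J (z, x) := by rw [← hJ, Fintype.sum_prod_type]
    _ ≤ ∑ z, ∑ _x : α, univ.sup' univ_nonempty fun x => J (z, x) :=
      sum_le_sum fun z _ => sum_le_sum fun x _ => le_sup' (fun x => J (z, x)) (mem_univ x)
    _ = _ := by simp [mul_sum, mul_comm]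

theorem sum_marginal_mul_apply_cond_le (F : (α → ℝ) → ℝ) {ε B t : ℝ} (hε : 0 ≤ ε)
    (hB : 0 ≤ B) (ht : 0 < t) (hFB : ∀ P, IsPMF P → F P ≤ B)
    (hFε : ∀ P, IsPMF P → (∀ x, P x ≤ t) → F P ≤ ε) {J : ζ × α → ℝ} (hJ : IsPMF J) :
    ∑ z, (∑ x, J (z, x)) * F (fun x => J (z, x) / ∑ x', J (z, x'))
      ≤ ε + (∑ z, univ.sup' univ_nonempty fun x => J (z, x)) / t * B := by
  calc _ ≤ ∑ z, ((∑ x, J (z, x)) * ε + (univ.sup' univ_nonempty fun x => J (z, x)) / t * B) :=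
        sum_le_sum fun z _ => sum_mul_apply_div_sum_le F hε hB ht hFB hFε fun x => hJ.1 _
    _ = _ := by
      rw [sum_add_distrib, ← sum_mul, ← sum_mul, ← sum_div, ← Fintype.sum_prod_type, hJ.2,
        one_mul]

end

/-- Every extractor for a bounded nonnegative weak divergence `D` is an
average-case extractor, with a small loss in parameters. -/
theorem extractor_is_average_case (n d m : ℕ) (k ε : ℝ)
    (D : ((Fin m → Bool) → ℝ) → ℝ) (B : ℝ)
    (hD0 : ∀ P : (Fin m → Bool) → ℝ, IsPMF P → 0 ≤ D P)
    (hDB : ∀ P : (Fin m → Bool) → ℝ, IsPMF P → D P ≤ B)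
    (Ext : (Fin n → Bool) → (Fin d → Bool) → (Fin m → Bool))
    (hExt : ∀ X : (Fin n → Bool) → ℝ, IsPMF X →
      (∀ x, X x ≤ (2 : ℝ) ^ (-k)) → D (extDist n d m Ext X) ≤ ε)
    (η : ℝ) (hη0 : 0 < η) (hη1 : η ≤ 1)
    (ζ : Type) [Fintype ζ]
    (J : ζ × (Fin n → Bool) → ℝ) (hJ : IsPMF J)
    (hHmin : ∑ z, (Finset.univ.sup' Finset.univ_nonempty fun x => J (z, x))
      ≤ (2 : ℝ) ^ (-(k + Real.logb 2 (1 / η)))) :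
    ∑ z, (∑ x, J (z, x))
        * D (extDist n d m Ext (fun x => J (z, x) / ∑ x', J (z, x')))
      ≤ ε + η * B := by
  have hthreshold : (2 : ℝ) ^ (-(k + Real.logb 2 (1 / η))) = 2 ^ (-k) * η := by
    rw [neg_add, Real.rpow_add two_pos, Real.rpow_neg zero_le_two (Real.logb _ _),
      Real.rpow_logb two_pos (by norm_num) (by positivity), one_div, inv_inv]
  -- the uniform source has min-entropy `n ≥ k`, which forces `ε ≥ 0` and `B ≥ 0`
  have hU : ∀ x : Fin n → Bool, (Fintype.card (Fin n → Bool) : ℝ)⁻¹ ≤ 2 ^ (-k) := fun _ =>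
    calc _ ≤ _ := inv_card_le_sum_sup' hJ.2
      _ ≤ _ := hHmin
      _ ≤ _ := hthreshold ▸ mul_le_of_le_one_right (by positivity) hη1
  have hUD := IsPMF.inv_card.extDist Ext
  have hε : 0 ≤ ε := (hD0 _ hUD).trans (hExt _ IsPMF.inv_card hU)
  have hB : 0 ≤ B := (hD0 _ hUD).trans (hDB _ hUD)
  calc _ ≤ ε + (∑ z, univ.sup' univ_nonempty fun x => J (z, x)) / 2 ^ (-k) * B :=
        sum_marginal_mul_apply_cond_le (fun P => D (extDist n d m Ext P)) hε hB (by positivity)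
          (fun P hP => hDB _ (hP.extDist Ext)) hExt hJ
    _ ≤ ε + η * B := by
      gcongr
      rw [div_le_iff₀ (by positivity)]
      linarith
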